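/- Suppose W₁₁, W₂₂, W₁₂, T₁₂ are real numbers satisfying L₁ ≤ W₁₁ ≤ U₁, L₂ ≤ W₂₂ ≤ U₂, L₁₂ W₁₂ ≤ T₁₂ ≤ U₁₂ W₁₂, W₁₂ ≥ 0, and W₁₁ W₂₂ = W₁₂² + T₁₂², where 0 ≤ L₁ ≤ U₁, 0 ≤ L₂ ≤ U₂, L₁₂ ≤ U₁₂. Then with f(x) = (sqrt(1+x²)-1)/x (f(0)=0), π₀ = -sqrt(L₁ L₂ U₁ U₂), π₁ = -sqrt(L₂ U₂), π₂ = -sqrt(L₁ U₁), π₃ = (sqrt L₁ + sqrt U₁)(sqrt L₂ + sqrt U₂)(1 - f(L₁₂)f(U₁₂))/(1 + f(L₁₂)f(U₁₂)), π₄ = (sqrt L₁ + sqrt U₁)(sqrt L₂ + sqrt U₂)(f(L₁₂)+f(U₁₂))/(1 + f(L₁₂)f(U₁₂)), the inequality π₀ + π₁ W₁₁ + π₂ W₂₂ + π₃ W₁₂ + π₄ T₁₂ ≥ U₂ W₁₁ + U₁ W₂₂ - U₁ U₂ holds. -/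
import Mathlib

noncomputable def f (x : ℝ) : ℝ := if x = 0 then 0 else (Real.sqrt (1 + x ^ 2) - 1) / x

lemma f_key (x : ℝ) : (1 - f x ^ 2) * x = 2 * f x := by
  unfold f
  split_ifs with h
  · simp [h]
  · have h1 : (0:ℝ) ≤ 1 + x ^ 2 := by positivity
    have hs : Real.sqrt (1 + x ^ 2) ^ 2 = 1 + x ^ 2 := Real.sq_sqrt h1
    field_simp
    nlinarith [hs]

lemma f_sq_lt (x : ℝ) : f x ^ 2 < 1 := by
  unfold f
  split_ifs with h
  · norm_num
  · have h1 : (0:ℝ) ≤ 1 + x ^ 2 := by positivity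
    have hs : Real.sqrt (1 + x ^ 2) ^ 2 = 1 + x ^ 2 := Real.sq_sqrt h1
    have hs0 : 0 ≤ Real.sqrt (1 + x ^ 2) := Real.sqrt_nonneg _
    have hx : 0 < x ^ 2 := by positivity
    have hgt : 1 < Real.sqrt (1 + x ^ 2) := by nlinarith
    rw [div_pow, div_lt_one hx]
    nlinarith

-- abstract version of the trig part
lemma trig_part (u v W T : ℝ) (hu1 : u ^ 2 < 1) (hv1 : v ^ 2 < 1)
    (hW : 0 ≤ W)
    (hX : 0 ≤ (1 - u ^ 2) * T - 2 * u * W)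
    (hY : 0 ≤ 2 * v * W - (1 - v ^ 2) * T)
    (hule : u ≤ v) :
    0 ≤ (1 - u * v) * W + (u + v) * T := by
  rcases eq_or_lt_of_le hule with he | hlt
  · subst he
    have eT : (1 - u ^ 2) * T = 2 * u * W := by linarith
    have eA : (1 - u ^ 2) * ((1 - u * u) * W + (u + u) * T) = (1 + u ^ 2) ^ 2 * W := by
      linear_combination (2 * u) * eT
    nlinarith [eA, mul_nonneg (sq_nonneg (1 + u ^ 2)) hW, hu1]
  · nlinarith [mul_nonneg (by nlinarith : (0:ℝ) ≤ 1 + v ^ 2) hX,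
      mul_nonneg (by nlinarith : (0:ℝ) ≤ 1 + u ^ 2) hY, hlt]

lemma trig_main (u v W T : ℝ) (hu1 : u ^ 2 < 1) (hv1 : v ^ 2 < 1)
    (hW : 0 ≤ W)
    (hX : 0 ≤ (1 - u ^ 2) * T - 2 * u * W)
    (hY : 0 ≤ 2 * v * W - (1 - v ^ 2) * T)
    (hule : u ≤ v) :
    (1 + u * v) * Real.sqrt (W ^ 2 + T ^ 2) ≤ (1 - u * v) * W + (u + v) * T := by
  have huv : 0 < 1 + u * v := by nlinarith [sq_nonneg (u + v), sq_nonneg (u - v)]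
  have hA := trig_part u v W T hu1 hv1 hW hX hY hule
  have hs0 : 0 ≤ Real.sqrt (W ^ 2 + T ^ 2) := Real.sqrt_nonneg _
  have hs2 : Real.sqrt (W ^ 2 + T ^ 2) ^ 2 = W ^ 2 + T ^ 2 := Real.sq_sqrt (by positivity)
  set s := Real.sqrt (W ^ 2 + T ^ 2)
  have hsq : ((1 + u * v) * s) ^ 2 ≤ ((1 - u * v) * W + (u + v) * T) ^ 2 := by
    have hXY := mul_nonneg hX hY
    have e : ((1 + u * v) * s) ^ 2 = (1 + u * v) ^ 2 * (W ^ 2 + T ^ 2) := by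
      rw [mul_pow, hs2]
    rw [e]
    nlinarith [hXY]
  nlinarith [hsq, hA, mul_nonneg huv.le hs0]

lemma pi_bound (K u v W T ab : ℝ) (huv : 0 < 1 + u * v)
    (h : K * ((1 + u * v) * ab) ≤ K * ((1 - u * v) * W + (u + v) * T)) :
    K * ab ≤ (K * ((1 - u * v) / (1 + u * v))) * W + (K * ((u + v) / (1 + u * v))) * T := by
  have hne : (1 + u * v) ≠ 0 := ne_of_gt huv
  have eR : (K * ((1 - u * v) / (1 + u * v))) * W + (K * ((u + v) / (1 + u * v))) * T
      = (K * ((1 - u * v) * W + (u + v) * T)) / (1 + u * v) := by field_simp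
  rw [eR, le_div_iff₀ huv]
  nlinarith [h]

lemma corner (p P q Q a b : ℝ) (hp : 0 ≤ p) (hq : 0 ≤ q)
    (h1 : p ≤ a) (h2 : a ≤ P) (h3 : q ≤ b) (h4 : b ≤ Q) :
    Q*(q+Q)*a^2 + P*(p+P)*b^2 + p*q*(P*Q) ≤ (p+P)*(q+Q)*(a*b) + P^2*Q^2 := by
  have hr : 0 ≤ a - p := by linarith
  have hs : 0 ≤ P - a := by linarith
  have ht : 0 ≤ b - q := by linarith
  have hw : 0 ≤ Q - b := by linarith
  nlinarith [mul_nonneg hr hs, mul_nonneg ht hw, mul_nonneg hr ht, mul_nonneg hs hw,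
    mul_nonneg hr hw, mul_nonneg hs ht, mul_nonneg hq hs, mul_nonneg hq hr,
    mul_nonneg hq hw, mul_nonneg hq ht, mul_nonneg hp hs, mul_nonneg hp hr,
    mul_nonneg hp ht, mul_nonneg hp hw, mul_nonneg hp hq,
    mul_nonneg hr hr, mul_nonneg hs hs, mul_nonneg ht ht, mul_nonneg hw hw,
    mul_nonneg hp hp, mul_nonneg hq hq]

theorem valid_inequality_upper (L₁ U₁ L₂ U₂ L₁₂ U₁₂ W₁₁ W₂₂ W₁₂ T₁₂ : ℝ)
    (hL₁ : 0 ≤ L₁) (hU₁ : L₁ ≤ U₁) (hL₂ : 0 ≤ L₂) (hU₂ : L₂ ≤ U₂) (hLU : L₁₂ ≤ U₁₂)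
    (h1 : L₁ ≤ W₁₁) (h2 : W₁₁ ≤ U₁) (h3 : L₂ ≤ W₂₂) (h4 : W₂₂ ≤ U₂)
    (h5 : L₁₂ * W₁₂ ≤ T₁₂) (h6 : T₁₂ ≤ U₁₂ * W₁₂) (h7 : 0 ≤ W₁₂)
    (h8 : W₁₁ * W₂₂ = W₁₂ ^ 2 + T₁₂ ^ 2) :
    -Real.sqrt (L₁ * L₂ * U₁ * U₂)
      + (-Real.sqrt (L₂ * U₂)) * W₁₁ + (-Real.sqrt (L₁ * U₁)) * W₂₂
      + ((Real.sqrt L₁ + Real.sqrt U₁) * (Real.sqrt L₂ + Real.sqrt U₂)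
          * ((1 - f L₁₂ * f U₁₂) / (1 + f L₁₂ * f U₁₂))) * W₁₂
      + ((Real.sqrt L₁ + Real.sqrt U₁) * (Real.sqrt L₂ + Real.sqrt U₂)
          * ((f L₁₂ + f U₁₂) / (1 + f L₁₂ * f U₁₂))) * T₁₂
      ≥ U₂ * W₁₁ + U₁ * W₂₂ - U₁ * U₂ := by
  have hU₁' : 0 ≤ U₁ := le_trans hL₁ hU₁
  have hU₂' : 0 ≤ U₂ := le_trans hL₂ hU₂
  have hW11 : 0 ≤ W₁₁ := le_trans hL₁ h1
  have hW22 : 0 ≤ W₂₂ := le_trans hL₂ h3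
  set u := f L₁₂ with hudef
  set v := f U₁₂ with hvdef
  have hu1 : u ^ 2 < 1 := f_sq_lt _
  have hv1 : v ^ 2 < 1 := f_sq_lt _
  have h1u : 0 < 1 - u ^ 2 := by linarith
  have h1v : 0 < 1 - v ^ 2 := by linarith
  have hLk : (1 - u ^ 2) * L₁₂ = 2 * u := f_key _
  have hUk : (1 - v ^ 2) * U₁₂ = 2 * v := f_key _
  have huv : 0 < 1 + u * v := by nlinarith [sq_nonneg (u + v), sq_nonneg (u - v)]
  have hX : 0 ≤ (1 - u ^ 2) * T₁₂ - 2 * u * W₁₂ := by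
    have hh := mul_nonneg h1u.le (sub_nonneg.2 h5)
    have hh' : (1 - u ^ 2) * L₁₂ * W₁₂ = 2 * u * W₁₂ := by rw [hLk]
    nlinarith [hh, hh']
  have hY : 0 ≤ 2 * v * W₁₂ - (1 - v ^ 2) * T₁₂ := by
    have hh := mul_nonneg h1v.le (sub_nonneg.2 h6)
    have hh' : (1 - v ^ 2) * U₁₂ * W₁₂ = 2 * v * W₁₂ := by rw [hUk]
    nlinarith [hh, hh']
  have hule : u ≤ v := by
    have hh := mul_le_mul_of_nonneg_left hLU (mul_nonneg h1u.le h1v.le)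
    have hL2 : (1 - v ^ 2) * ((1 - u ^ 2) * L₁₂) = (1 - v ^ 2) * (2 * u) := by rw [hLk]
    have hU2 : (1 - u ^ 2) * ((1 - v ^ 2) * U₁₂) = (1 - u ^ 2) * (2 * v) := by rw [hUk]
    nlinarith [hh, hL2, hU2, huv]
  have key := trig_main u v W₁₂ T₁₂ hu1 hv1 h7 hX hY hule
  set p := Real.sqrt L₁ with hpdef
  set P := Real.sqrt U₁ with hPdef
  set q := Real.sqrt L₂ with hqdef
  set Q := Real.sqrt U₂ with hQdef
  set a := Real.sqrt W₁₁ with hadef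
  set b := Real.sqrt W₂₂ with hbdef
  have hp0 : 0 ≤ p := Real.sqrt_nonneg _
  have hq0 : 0 ≤ q := Real.sqrt_nonneg _
  have hpa : p ≤ a := Real.sqrt_le_sqrt h1
  have haP : a ≤ P := Real.sqrt_le_sqrt h2
  have hqb : q ≤ b := Real.sqrt_le_sqrt h3
  have hbQ : b ≤ Q := Real.sqrt_le_sqrt h4
  have ha2 : a ^ 2 = W₁₁ := Real.sq_sqrt hW11
  have hb2 : b ^ 2 = W₂₂ := Real.sq_sqrt hW22
  have hP2 : P ^ 2 = U₁ := Real.sq_sqrt hU₁'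
  have hQ2 : Q ^ 2 = U₂ := Real.sq_sqrt hU₂'
  have hsab : Real.sqrt (W₁₂ ^ 2 + T₁₂ ^ 2) = a * b := by
    rw [← h8, Real.sqrt_mul hW11]
  have e1 : Real.sqrt (L₂ * U₂) = q * Q := Real.sqrt_mul hL₂ _
  have e2 : Real.sqrt (L₁ * U₁) = p * P := Real.sqrt_mul hL₁ _
  have e3 : Real.sqrt (L₁ * L₂ * U₁ * U₂) = p * q * (P * Q) := by
    rw [Real.sqrt_mul (mul_nonneg (mul_nonneg hL₁ hL₂) hU₁'),
      Real.sqrt_mul (mul_nonneg hL₁ hL₂), Real.sqrt_mul hL₁]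
    ring
  have hK : 0 ≤ (p + P) * (q + Q) := by positivity
  have hstep := mul_le_mul_of_nonneg_left key hK
  rw [hsab] at hstep
  clear_value u v p P q Q a b
  have hπ := pi_bound ((p + P) * (q + Q)) u v W₁₂ T₁₂ (a * b) huv hstep
  have hc := corner p P q Q a b hp0 hq0 hpa haP hqb hbQ
  rw [e1, e2, e3, ← hQ2, ← hP2, ← ha2, ← hb2]
  linarith [hπ, hc]
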